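/- arXiv:math/0503589 — 2 statements merged into one kernel-verified Lean document; each statement's English description precedes it below -/
import Mathlib

section
/- Let 1/2 ≤ c ≤ 1, let n ≥ 2, and let X_1, ..., X_n be i.i.d. random variables with P(X_1 = 1) = 1/2 = 1 - P(X_1 = 0). With Y_i = X_i - i·c, one has M(Y_1,...,Y_n) - V(Y_1,...,Y_n) = (1-c)/4; that is, the upper bound of the prophet inequality for fixed cost c ≥ 1/2 is attained. -/
/-!
Since `c ≥ 1/2`, every `Y_i` with `i ≥ 3` is at most `1 - 3c ≤ -c ≤ Y_1`, so the prophet gets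
`E max(Y_1, Y_2) = 1/2 - c + (1 - c)/4`. The statistician cannot beat stopping at once: `X_i` is
independent of the event `{τ ≥ i}`, which is decided by `X_1, …, X_{i-1}`, so
`E Y_τ ≤ Σ_i E[1{τ ≥ i} (X_i - c)] = (1/2 - c) E τ ≤ 1/2 - c`.
-/

open MeasureTheory ProbabilityTheory

/-- The σ-algebra generated by `Y 1, ..., Y i`. -/
def priorSigma {Ω : Type*} (Y : ℕ → Ω → ℝ) (i : ℕ) : MeasurableSpace Ω :=
  ⨆ j ∈ Finset.Icc 1 i, MeasurableSpace.comap (Y j) Real.measurableSpace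

/-- `τ` is a stopping rule for `Y 1, ..., Y n`: it takes values in `{1, ..., n}` and
each event `{τ = i}` depends only on `Y 1, ..., Y i`. -/
def IsStopRule {Ω : Type*} (Y : ℕ → Ω → ℝ) (n : ℕ) (τ : Ω → ℕ) : Prop :=
  (∀ ω, τ ω ∈ Finset.Icc 1 n) ∧
  ∀ i ∈ Finset.Icc 1 n, MeasurableSet[priorSigma Y i] {ω | τ ω = i}

/-- `V(Y_1,...,Y_n) = sup_τ E(Y_τ)`: the optimal expected return of the statistician. -/
noncomputable def Vn {Ω : Type*} [MeasurableSpace Ω] (μ : Measure Ω)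
    (Y : ℕ → Ω → ℝ) (n : ℕ) : ℝ :=
  sSup {r | ∃ τ, IsStopRule Y n τ ∧ r = ∫ ω, Y (τ ω) ω ∂μ}

/-- `M(Y_1,...,Y_n) = E(max_{1 ≤ i ≤ n} Y_i)`: the expected return of the prophet. -/
noncomputable def Mn {Ω : Type*} [MeasurableSpace Ω] (μ : Measure Ω)
    (Y : ℕ → Ω → ℝ) (n : ℕ) : ℝ :=
  ∫ ω, sSup ((fun i => Y i ω) '' Set.Icc 1 n) ∂μ

section PriorSigma

variable {Ω : Type*}

lemma priorSigma_mono (Y : ℕ → Ω → ℝ) : Monotone (priorSigma Y) := fun _ _ hij =>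
  biSup_mono fun _ hk => Finset.Icc_subset_Icc_right hij hk

lemma priorSigma_le [m : MeasurableSpace Ω] {Y : ℕ → Ω → ℝ} (hY : ∀ i, Measurable (Y i))
    (i : ℕ) : priorSigma Y i ≤ m :=
  iSup₂_le fun j _ => (hY j).comap_le

lemma priorSigma_le_of_comp {X Y : ℕ → Ω → ℝ} {g : ℕ → ℝ → ℝ} (hg : ∀ j, Measurable (g j))
    (hY : ∀ j ω, Y j ω = g j (X j ω)) (i : ℕ) : priorSigma Y i ≤ priorSigma X i := by
  refine iSup₂_mono fun j _ => ?_
  rw [show Y j = g j ∘ X j from funext (hY j), ← MeasurableSpace.comap_comp]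
  exact MeasurableSpace.comap_mono (hg j).comap_le

lemma indep_priorSigma_pred_comap [MeasurableSpace Ω] {μ : Measure Ω} {X : ℕ → Ω → ℝ} {n : ℕ}
    (hX : ∀ i, Measurable (X i)) (hindep : iIndepFun (fun k : Fin n => X (k.1 + 1)) μ)
    {i : ℕ} (hi : i ∈ Finset.Icc 1 n) :
    Indep (priorSigma X (i - 1)) (MeasurableSpace.comap (X i) Real.measurableSpace) μ := by
  rw [Finset.mem_Icc] at hi
  let m : Fin n → MeasurableSpace Ω := fun k =>
    MeasurableSpace.comap (X (k.1 + 1)) Real.measurableSpace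
  have hcomap_le : ∀ j (hj : 1 ≤ j) (hjn : j ≤ n) (S : Set (Fin n)), ⟨j - 1, by omega⟩ ∈ S →
      MeasurableSpace.comap (X j) Real.measurableSpace ≤ ⨆ k ∈ S, m k := fun j hj _ _ hS => by
    have h := le_biSup m hS
    simp only [m, Nat.sub_add_cancel hj] at h
    exact h
  refine indep_of_indep_of_le_right (indep_of_indep_of_le_left
    (indep_iSup_of_disjoint (fun k => (hX _).comap_le) hindep.iIndep
      (S := {k | k.1 + 1 < i}) (T := {k | k.1 + 1 = i})
      (Set.disjoint_left.2 fun k hS hT => by simp_all)) ?_)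
    (hcomap_le i hi.1 hi.2 _ (by simp; omega))
  exact iSup₂_le fun j hj => by
    rw [Finset.mem_Icc] at hj
    exact hcomap_le j hj.1 (by omega) _ (by simp; omega)

end PriorSigma

section StopRule

variable {Ω : Type*} {Y : ℕ → Ω → ℝ} {n : ℕ} {τ : Ω → ℕ}

lemma isStopRule_const_one (hn : 1 ≤ n) : IsStopRule Y n (fun _ => 1) :=
  ⟨fun _ => Finset.mem_Icc.2 ⟨le_rfl, hn⟩, fun _ _ => MeasurableSet.const _⟩

lemma IsStopRule.measurableSet_le (hτ : IsStopRule Y n τ) {i : ℕ} (hi : i ≤ n) :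
    MeasurableSet[priorSigma Y (i - 1)] {ω | i ≤ τ ω} := by
  have hτ_eq : {ω | i ≤ τ ω} = ⋂ j ∈ Finset.Ico 1 i, {ω | τ ω = j}ᶜ := by
    ext ω
    have := (Finset.mem_Icc.1 (hτ.1 ω)).1
    simp only [Set.mem_ofPred_eq, Set.mem_iInter, Finset.mem_Ico, Set.mem_compl_iff]
    constructor
    · rintro h j ⟨-, hj⟩ rfl; omega
    · intro h; by_contra! hlt; exact h _ ⟨this, hlt⟩ rfl
  rw [hτ_eq]
  refine Finset.measurableSet_biInter _ fun j hj => ?_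
  rw [Finset.mem_Ico] at hj
  exact (priorSigma_mono Y (by omega : j ≤ i - 1) _
    (hτ.2 j (Finset.mem_Icc.2 ⟨hj.1, by omega⟩))).compl

lemma IsStopRule.integrable [MeasurableSpace Ω] {μ : Measure Ω} (hτ : IsStopRule Y n τ)
    (hYm : ∀ i, Measurable (Y i)) (hint : ∀ i ∈ Finset.Icc 1 n, Integrable (Y i) μ) :
    Integrable (fun ω => Y (τ ω) ω) μ := by
  have hsum : (fun ω => Y (τ ω) ω) =
      fun ω => ∑ i ∈ Finset.Icc 1 n, {ω | τ ω = i}.indicator (Y i) ω := by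
    funext ω
    rw [Finset.sum_eq_single_of_mem (f := fun i => {ω | τ ω = i}.indicator (Y i) ω) (τ ω)
      (hτ.1 ω) fun j _ hj => Set.indicator_of_notMem (show ω ∉ {ω | τ ω = j} from Ne.symm hj) _]
    exact (Set.indicator_of_mem (show ω ∈ {ω | τ ω = τ ω} from rfl) _).symm
  rw [hsum]
  exact integrable_finsetSum _ fun i hi => (hint i hi).indicator (priorSigma_le hYm i _ (hτ.2 i hi))

end StopRule

lemma sub_mul_le_sum_Icc_ite_le {x : ℕ → ℝ} {n t : ℕ} (c : ℝ)
    (hx : ∀ i ∈ Finset.Icc 1 n, 0 ≤ x i) (ht : t ∈ Finset.Icc 1 n) :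
    x t - t * c ≤ ∑ i ∈ Finset.Icc 1 n, if i ≤ t then x i - c else 0 := by
  rw [Finset.mem_Icc] at ht
  have hfilter : (Finset.Icc 1 n).filter (· ≤ t) = Finset.Icc 1 t := by
    ext i; simp only [Finset.mem_filter, Finset.mem_Icc]; omega
  rw [← Finset.sum_filter, hfilter, Finset.sum_sub_distrib, Finset.sum_const, Nat.card_Icc,
    Nat.add_sub_cancel, nsmul_eq_mul, sub_le_sub_iff_right]
  exact Finset.single_le_sum (fun i hi => hx i (by simp only [Finset.mem_Icc] at hi ⊢; omega))
    (Finset.mem_Icc.2 ⟨ht.1, le_rfl⟩)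

section Statistician

variable {Ω : Type*} [MeasurableSpace Ω] {μ : Measure Ω} [IsProbabilityMeasure μ]
  {X Y : ℕ → Ω → ℝ} {n : ℕ} {c m : ℝ}

theorem IsStopRule.integral_le_mean_sub (hX : ∀ i, Measurable (X i))
    (hindep : iIndepFun (fun k : Fin n => X (k.1 + 1)) μ) (hY : ∀ i ω, Y i ω = X i ω - i * c)
    (hnonneg : ∀ i ∈ Finset.Icc 1 n, ∀ᵐ ω ∂μ, 0 ≤ X i ω)
    (hint : ∀ i ∈ Finset.Icc 1 n, Integrable (X i) μ)
    (hmean : ∀ i ∈ Finset.Icc 1 n, ∫ ω, X i ω ∂μ = m) (hmc : m ≤ c) {τ : Ω → ℕ}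
    (hτ : IsStopRule Y n τ) :
    ∫ ω, Y (τ ω) ω ∂μ ≤ m - c := by
  obtain ⟨ω₀⟩ := nonempty_of_isProbabilityMeasure μ
  have hn : 1 ≤ n := (Finset.mem_Icc.1 (hτ.1 ω₀)).1.trans (Finset.mem_Icc.1 (hτ.1 ω₀)).2
  set T : ℕ → Set Ω := fun i => {ω | i ≤ τ ω}
  have hT : ∀ i ∈ Finset.Icc 1 n, MeasurableSet[priorSigma X (i - 1)] (T i) := fun i hi =>
    priorSigma_le_of_comp (g := fun j x => x - j * c) (fun _ => measurable_id.sub_const _) hY _ _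
      (hτ.measurableSet_le (Finset.mem_Icc.1 hi).2)
  have hT' : ∀ i ∈ Finset.Icc 1 n, MeasurableSet (T i) := fun i hi => priorSigma_le hX _ _ (hT i hi)
  have hterm : ∀ i ∈ Finset.Icc 1 n,
      ∫ ω, (T i).indicator (fun ω => X i ω - c) ω ∂μ = μ.real (T i) * (m - c) := by
    intro i hi
    have hind := (indep_priorSigma_pred_comap hX hindep hi).setIntegral_eq_mul (f := id)
      (priorSigma_le hX _) (hX i).aemeasurable (hT i hi) aestronglyMeasurable_id
    simp only [id] at hind
    rw [integral_indicator (hT' i hi), integral_sub (hint i hi).integrableOn (integrable_const c),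
      hind, setIntegral_const, hmean i hi, smul_eq_mul]
    ring
  have hsum_int : Integrable (fun ω => ∑ i ∈ Finset.Icc 1 n,
      (T i).indicator (fun ω => X i ω - c) ω) μ :=
    integrable_finsetSum _ fun i hi => ((hint i hi).sub (integrable_const c)).indicator (hT' i hi)
  have hYint : Integrable (fun ω => Y (τ ω) ω) μ := by
    refine hτ.integrable (fun i => ?_) (fun i hi => ?_) <;> rw [show Y i = _ from funext (hY i)]
    exacts [(hX i).sub_const _, (hint i hi).sub (integrable_const _)]
  have hbound : (fun ω => Y (τ ω) ω) ≤ᵐ[μ]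
      fun ω => ∑ i ∈ Finset.Icc 1 n, (T i).indicator (fun ω => X i ω - c) ω := by
    filter_upwards [(Filter.eventually_all_finset _).2 hnonneg] with ω hω
    simp only [T, Set.indicator_apply, Set.mem_ofPred_eq, hY]
    exact sub_mul_le_sum_Icc_ite_le c hω (hτ.1 ω)
  have hT_one : μ.real (T 1) = 1 := by
    have : T 1 = Set.univ := Set.eq_univ_of_forall fun ω => (Finset.mem_Icc.1 (hτ.1 ω)).1
    rw [this, probReal_univ]
  calc ∫ ω, Y (τ ω) ω ∂μ
      ≤ ∫ ω, ∑ i ∈ Finset.Icc 1 n, (T i).indicator (fun ω => X i ω - c) ω ∂μ :=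
        integral_mono_ae hYint hsum_int hbound
    _ = (∑ i ∈ Finset.Icc 1 n, μ.real (T i)) * (m - c) := by
        rw [integral_finsetSum (f := fun i ω => (T i).indicator (fun ω => X i ω - c) ω) _
          fun i hi => ((hint i hi).sub (integrable_const c)).indicator (hT' i hi), Finset.sum_mul]
        exact Finset.sum_congr rfl hterm
    _ ≤ 1 * (m - c) := by
        refine mul_le_mul_of_nonpos_right ?_ (by linarith)
        rw [← hT_one]
        exact Finset.single_le_sum (fun i _ => measureReal_nonneg)
          (Finset.mem_Icc.2 ⟨le_rfl, hn⟩)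
    _ = m - c := one_mul _

theorem Vn_eq_mean_sub (hX : ∀ i, Measurable (X i))
    (hindep : iIndepFun (fun k : Fin n => X (k.1 + 1)) μ) (hY : ∀ i ω, Y i ω = X i ω - i * c)
    (hnonneg : ∀ i ∈ Finset.Icc 1 n, ∀ᵐ ω ∂μ, 0 ≤ X i ω)
    (hint : ∀ i ∈ Finset.Icc 1 n, Integrable (X i) μ)
    (hmean : ∀ i ∈ Finset.Icc 1 n, ∫ ω, X i ω ∂μ = m) (hmc : m ≤ c) (hn : 1 ≤ n) :
    Vn μ Y n = m - c := by
  have h1 : 1 ∈ Finset.Icc 1 n := Finset.mem_Icc.2 ⟨le_rfl, hn⟩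
  refine IsGreatest.csSup_eq ⟨⟨fun _ => 1, isStopRule_const_one hn, ?_⟩, ?_⟩
  · simp only [hY, Nat.cast_one, one_mul]
    rw [integral_sub (hint 1 h1) (integrable_const c), hmean 1 h1, integral_const, probReal_univ,
      one_smul]
  · rintro _ ⟨τ, hτ, rfl⟩
    exact hτ.integral_le_mean_sub hX hindep hY hnonneg hint hmean hmc

end Statistician

lemma sSup_image_sub_mul_Icc {x : ℕ → ℝ} {n : ℕ} {c : ℝ}
    (hx : ∀ i ∈ Finset.Icc 1 n, x i ∈ ({0, 1} : Set ℝ)) (hc0 : 1 / 2 ≤ c) (hc : c ≤ 1)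
    (hn : 2 ≤ n) :
    sSup ((fun i : ℕ => x i - i * c) '' Set.Icc 1 n) = x 1 - c + (1 - x 1) * x 2 * (1 - c) := by
  simp only [Set.mem_insert_iff, Set.mem_singleton_iff] at hx
  have h1n : 1 ∈ Set.Icc 1 n := ⟨le_rfl, by omega⟩
  have h2n : 2 ∈ Set.Icc 1 n := ⟨by norm_num, hn⟩
  have hx1 := hx 1 (Finset.mem_Icc.2 h1n)
  have hx2 := hx 2 (Finset.mem_Icc.2 h2n)
  refine IsGreatest.csSup_eq ⟨?_, ?_⟩
  · rcases hx1 with h1 | h1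
    · rcases hx2 with h2 | h2
      · exact ⟨1, h1n, by simp [h1, h2]⟩
      · exact ⟨2, h2n, by simp [h1, h2]; ring⟩
    · exact ⟨1, h1n, by simp [h1]⟩
  · rintro _ ⟨i, ⟨hi1, hin⟩, rfl⟩
    have hxi : x i ≤ 1 := by
      rcases hx i (Finset.mem_Icc.2 ⟨hi1, hin⟩) with h | h <;> norm_num [h]
    obtain rfl | rfl | hi3 : i = 1 ∨ i = 2 ∨ 3 ≤ i := by omega
    · rcases hx1 with h1 | h1 <;> rcases hx2 with h2 | h2 <;> simp only [h1, h2, Nat.cast_one] <;>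
        linarith
    · rcases hx1 with h1 | h1 <;> rcases hx2 with h2 | h2 <;> simp only [h1, h2, Nat.cast_ofNat] <;>
        linarith
    · have hi3' : (3 : ℝ) ≤ i := by exact_mod_cast hi3
      rcases hx1 with h1 | h1 <;> rcases hx2 with h2 | h2 <;> simp only [h1, h2] <;> nlinarith

section Prophet

variable {Ω : Type*} [MeasurableSpace Ω] {μ : Measure Ω} [IsProbabilityMeasure μ]

lemma integrable_of_ae_mem_zero_one {f : Ω → ℝ} (hf : Measurable f)
    (h : ∀ᵐ ω ∂μ, f ω ∈ ({0, 1} : Set ℝ)) : Integrable f μ :=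
  Integrable.of_bound hf.aestronglyMeasurable 1 (h.mono fun ω hω => by
    obtain h | h : f ω = 0 ∨ f ω = 1 := hω <;> norm_num [h])

lemma ae_mem_zero_one_of_measure_eq_half {f : Ω → ℝ} (hf : Measurable f)
    (h1 : μ {ω | f ω = 1} = ENNReal.ofReal (1 / 2))
    (h0 : μ {ω | f ω = 0} = ENNReal.ofReal (1 / 2)) :
    ∀ᵐ ω ∂μ, f ω ∈ ({0, 1} : Set ℝ) := by
  have hsplit : {ω | f ω ∈ ({0, 1} : Set ℝ)} = {ω | f ω = 0} ∪ {ω | f ω = 1} := by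
    ext ω; simp only [Set.mem_insert_iff, Set.mem_singleton_iff, Set.mem_union, Set.mem_ofPred_eq]
  rw [ae_iff_measure_eq (hf (by measurability)).nullMeasurableSet, hsplit,
    measure_union (Set.disjoint_left.2 fun ω h0 h1 => by simp_all)
      (measurableSet_eq_fun hf measurable_const),
    h0, h1, ← ENNReal.ofReal_add (by norm_num) (by norm_num), measure_univ]
  norm_num

lemma integral_eq_half_of_measure_eq_half {f : Ω → ℝ} (hf : Measurable f)
    (h1 : μ {ω | f ω = 1} = ENNReal.ofReal (1 / 2))
    (h0 : μ {ω | f ω = 0} = ENNReal.ofReal (1 / 2)) :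
    ∫ ω, f ω ∂μ = 1 / 2 := calc
  ∫ ω, f ω ∂μ = ∫ ω, {ω | f ω = 1}.indicator 1 ω ∂μ := by
    refine integral_congr_ae ((ae_mem_zero_one_of_measure_eq_half hf h1 h0).mono fun ω hω => ?_)
    obtain h | h : f ω = 0 ∨ f ω = 1 := hω <;> simp [h]
  _ = 1 / 2 := by
    rw [integral_indicator_one (measurableSet_eq_fun hf measurable_const), measureReal_def, h1,
      ENNReal.toReal_ofReal (by norm_num)]

theorem Mn_eq_of_mem_zero_one {X Y : ℕ → Ω → ℝ} {n : ℕ} {c : ℝ} (hX : ∀ i, Measurable (X i))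
    (hY : ∀ i ω, Y i ω = X i ω - i * c)
    (hbin : ∀ i ∈ Finset.Icc 1 n, ∀ᵐ ω ∂μ, X i ω ∈ ({0, 1} : Set ℝ))
    (h12 : IndepFun (X 1) (X 2) μ) (hc0 : 1 / 2 ≤ c) (hc : c ≤ 1) (hn : 2 ≤ n) :
    Mn μ Y n = (∫ ω, X 1 ω ∂μ) - c + (1 - ∫ ω, X 1 ω ∂μ) * (∫ ω, X 2 ω ∂μ) * (1 - c) := by
  have hint1 := integrable_of_ae_mem_zero_one (hX 1) (hbin 1 (Finset.mem_Icc.2 ⟨le_rfl, by omega⟩))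
  have hint2 := integrable_of_ae_mem_zero_one (hX 2) (hbin 2 (Finset.mem_Icc.2 ⟨by norm_num, hn⟩))
  have hpt : (fun ω => sSup ((fun i => Y i ω) '' Set.Icc 1 n)) =ᵐ[μ]
      fun ω => X 1 ω - c + (1 - c) * ((1 - X 1 ω) * X 2 ω) := by
    filter_upwards [(Filter.eventually_all_finset _).2 hbin] with ω hω
    simp only [hY]
    rw [sSup_image_sub_mul_Icc hω hc0 hc hn]
    ring
  have h12' : IndepFun (fun ω => 1 - X 1 ω) (X 2) μ :=
    h12.comp (measurable_const.sub measurable_id) measurable_id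
  have hmul : ∫ ω, (1 - X 1 ω) * X 2 ω ∂μ = (1 - ∫ ω, X 1 ω ∂μ) * ∫ ω, X 2 ω ∂μ := by
    simpa [integral_sub (integrable_const 1) hint1] using h12'.integral_mul_eq_mul_integral
      ((integrable_const 1).sub hint1).aestronglyMeasurable hint2.aestronglyMeasurable
  have hint12 : Integrable (fun ω => (1 - X 1 ω) * X 2 ω) μ :=
    h12'.integrable_mul ((integrable_const 1).sub hint1) hint2
  rw [Mn, integral_congr_ae hpt, integral_add (f := fun ω => X 1 ω - c)
    (hint1.sub (integrable_const c)) (hint12.const_mul _),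
    integral_sub hint1 (integrable_const c), integral_const_mul, hmul, integral_const,
    probReal_univ, one_smul]
  ring

end Prophet

theorem stmt5
    {Ω : Type*} [MeasurableSpace Ω] (μ : Measure Ω) [IsProbabilityMeasure μ]
    (n : ℕ) (X : ℕ → Ω → ℝ)
    (hmeas : ∀ i, Measurable (X i))
    (hindep : iIndepFun (fun i : Fin n => X (i.1 + 1)) μ)
    (hident : ∀ i ∈ Set.Icc 1 n, IdentDistrib (X i) (X 1) μ μ)
    (c : ℝ) (Y : ℕ → Ω → ℝ) (hY : ∀ i ω, Y i ω = X i ω - i * c)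
    (hc0 : 1/2 ≤ c) (hc : c ≤ 1) (hn : 2 ≤ n)
    (h1 : μ {ω | X 1 ω = 1} = ENNReal.ofReal (1/2))
    (h0 : μ {ω | X 1 ω = 0} = ENNReal.ofReal (1/2)) :
    Mn μ Y n - Vn μ Y n = (1 - c) / 4 := by
  have hbin : ∀ i ∈ Finset.Icc 1 n, ∀ᵐ ω ∂μ, X i ω ∈ ({0, 1} : Set ℝ) := fun i hi =>
    (hident i (by simpa using hi)).symm.ae_mem_snd (by measurability)
      (ae_mem_zero_one_of_measure_eq_half (hmeas 1) h1 h0)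
  have hmean : ∀ i ∈ Finset.Icc 1 n, ∫ ω, X i ω ∂μ = 1 / 2 := fun i hi =>
    (hident i (by simpa using hi)).integral_eq.trans
      (integral_eq_half_of_measure_eq_half (hmeas 1) h1 h0)
  have hnonneg : ∀ i ∈ Finset.Icc 1 n, ∀ᵐ ω ∂μ, 0 ≤ X i ω := fun i hi =>
    (hbin i hi).mono fun ω hω => by obtain h | h : X i ω = 0 ∨ X i ω = 1 := hω <;> norm_num [h]
  have h12 : IndepFun (X 1) (X 2) μ := by
    simpa using hindep.indepFun (i := ⟨0, by omega⟩) (j := ⟨1, by omega⟩) (by simp [Fin.ext_iff])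
  have hint : ∀ i ∈ Finset.Icc 1 n, Integrable (X i) μ := fun i hi =>
    integrable_of_ae_mem_zero_one (hmeas i) (hbin i hi)
  rw [Mn_eq_of_mem_zero_one hmeas hY hbin h12 hc0 hc hn,
    Vn_eq_mean_sub hmeas hindep hY hnonneg hint hmean (by linarith) (by omega),
    hmean 1 (Finset.mem_Icc.2 ⟨le_rfl, by omega⟩), hmean 2 (Finset.mem_Icc.2 ⟨by norm_num, hn⟩)]
  ring
end

section
/- (Reduction in the case E(X_1) ≤ c) Let n ≥ 2, let X_1, ..., X_n be i.i.d. random variables taking values in [0,1], let c > 0 with E(X_1) ≤ c, and let Y_i = X_i - i·c. Then M(Y_1,...,Y_n) - V(Y_1,...,Y_n) ≤ d_n, where d_n = (n-1)·(1 - 1/(n+1))^n/(n+1). -/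
open MeasureTheory ProbabilityTheory

/-!
The prophet is dominated pointwise by a majorant built from the survival products
`Q t = ∏_{j ≤ t} (1 - X_j)`: since `1 - Q i = ∑_{t < i} Q t X_{t+1}` and `(1 - t c)⁺` decreases,
`Y_i ≤ -c + ∑_{t < n} (1 - t c)⁺ Q t X_{t+1}`. By independence `E[Q t X_{t+1}] = (1 - p)^t p`
with `p = E X_1`, while the statistician gets `p - c` by stopping at once. The gap
`p ∑_{t=1}^{n-1} (1 - p)^t (1 - t c)⁺` is largest at `c = p`, where it equals `m p (1 - p)^(m+1)`
for some `m ≤ n - 1`; over `p` this is at most `m (m+1)^(m+1) / (m+2)^(m+2)`, which increases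
in `m` and equals `d_n` at `m = n - 1`.
-/

open Finset

lemma mul_one_sub_pow_le (k : ℕ) {x : ℝ} (h0 : 0 ≤ x) (h1 : x ≤ 1) :
    x * (1 - x) ^ k ≤ (k : ℝ) ^ k / (k + 1) ^ (k + 1) := by
  rcases Nat.eq_zero_or_pos k with rfl | hk
  · simpa using h1
  rcases h1.eq_or_lt with rfl | hx1
  · simp only [sub_self, zero_pow hk.ne', mul_zero]
    positivity
  have hk' : (0 : ℝ) < k := by exact_mod_cast hk
  have hx : 0 < 1 - x := by linarith
  -- Bernoulli at `r = k / ((k + 1) (1 - x))`, the ratio to the maximiser `1 - x = k / (k + 1)`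
  set r : ℝ := k / ((k + 1) * (1 - x)) with hr
  have bernoulli : (k + 1) * r - k ≤ r ^ (k + 1) := by
    have := one_add_mul_le_pow (a := r - 1) (by have : 0 ≤ r := by positivity
                                                linarith) (k + 1)
    rw [add_sub_cancel] at this
    push_cast at this
    linarith
  have hlhs : ((k + 1) * r - k) * (1 - x) ^ (k + 1) = k * (x * (1 - x) ^ k) := by
    rw [hr]; field_simp; ring
  have hrx : r * (1 - x) = k / (k + 1) := by rw [hr]; field_simp
  have hrhs : r ^ (k + 1) * (1 - x) ^ (k + 1) = k * (k ^ k / (k + 1) ^ (k + 1)) := by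
    rw [← mul_pow, hrx, div_pow]; ring
  have := mul_le_mul_of_nonneg_right bernoulli (pow_nonneg hx.le (k + 1))
  rw [hlhs, hrhs] at this
  exact le_of_mul_le_mul_left this hk'

lemma pow_add_mul_pow_le_add_one_pow {y : ℝ} (hy : 0 ≤ y) (k : ℕ) :
    y ^ (k + 1) + (k + 1) * y ^ k ≤ (y + 1) ^ (k + 1) := by
  induction k with
  | zero => simp
  | succ k ih =>
    push_cast
    have : 0 ≤ (k + 1) * y ^ k := by positivity
    calc y ^ (k + 2) + (k + 1 + 1) * y ^ (k + 1)
        ≤ y ^ (k + 2) + (k + 1 + 1) * y ^ (k + 1) + (k + 1) * y ^ k := by linarith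
      _ = (y + 1) * (y ^ (k + 1) + (k + 1) * y ^ k) := by ring
      _ ≤ (y + 1) * (y + 1) ^ (k + 1) := by gcongr
      _ = (y + 1) ^ (k + 2) := by ring

noncomputable def gapBound (m : ℕ) : ℝ := m * (m + 1) ^ (m + 1) / (m + 2) ^ (m + 2)

lemma gapBound_mono : Monotone gapBound := by
  refine monotone_nat_of_le_succ fun m => ?_
  have binom := pow_add_mul_pow_le_add_one_pow (y := (m + 1) * (m + 3)) (by positivity) (m + 1)
  rw [show ((m : ℝ) + 1) * (m + 3) + 1 = (m + 2) ^ 2 by ring, ← pow_mul] at binom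
  push_cast at binom
  unfold gapBound
  push_cast
  rw [div_le_div_iff₀ (by positivity) (by positivity)]
  calc (m : ℝ) * (m + 1) ^ (m + 1) * (m + 1 + 2) ^ (m + 1 + 2)
      = (m * (m + 3) ^ 2) * ((m + 1) * (m + 3)) ^ (m + 1) := by rw [mul_pow]; ring
    _ ≤ ((m + 1) * ((m + 1) * (m + 3) + (m + 2))) * ((m + 1) * (m + 3)) ^ (m + 1) := by
        gcongr ?_ * _; nlinarith
    _ = (m + 1) * (((m + 1) * (m + 3)) ^ (m + 1 + 1)
          + (m + 1 + 1) * ((m + 1) * (m + 3)) ^ (m + 1)) := by ring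
    _ ≤ (m + 1) * (m + 2) ^ (2 * (m + 1 + 1)) := by gcongr
    _ = (m + 1) * (m + 1 + 1) ^ (m + 1 + 1) * (m + 2) ^ (m + 2) := by ring

lemma gapBound_sub_one {n : ℕ} (hn : 1 ≤ n) :
    gapBound (n - 1) = ((n : ℝ) - 1) * (1 - 1 / ((n : ℝ) + 1)) ^ n / ((n : ℝ) + 1) := by
  obtain ⟨m, rfl⟩ := Nat.exists_eq_add_of_le' hn
  have h : 1 - 1 / ((m + 1 : ℕ) + 1 : ℝ) = (m + 1) / (m + 2) := by push_cast; field_simp; ring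
  rw [h, div_pow, gapBound]
  push_cast
  field_simp
  ring

lemma sum_range_one_sub_pow_mul (p : ℝ) (m : ℕ) :
    ∑ t ∈ range (m + 1), (1 - p) ^ t * (1 - t * p) = 1 + m * (1 - p) ^ (m + 1) := by
  induction m with
  | zero => simp
  | succ m ih =>
    rw [sum_range_succ, ih]
    push_cast
    ring

lemma exists_sum_range_pow_mul_max_le (p : ℝ) (N : ℕ) :
    ∃ m ≤ N, ∑ t ∈ range (N + 1), (1 - p) ^ t * max (1 - t * p) 0
      ≤ 1 + m * (1 - p) ^ (m + 1) := by
  induction N with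
  | zero => exact ⟨0, le_rfl, by simp⟩
  | succ N ih =>
    by_cases hN : 1 ≤ (N + 1 : ℕ) * p
    · obtain ⟨m, hmN, hm⟩ := ih
      refine ⟨m, hmN.trans N.le_succ, ?_⟩
      rwa [sum_range_succ, max_eq_right (by linarith), mul_zero, add_zero]
    · refine ⟨N + 1, le_rfl, le_of_eq ?_⟩
      rw [← sum_range_one_sub_pow_mul]
      refine sum_congr rfl fun t ht => ?_
      have htN : (t : ℝ) ≤ N + 1 := by exact_mod_cast Nat.lt_succ_iff.mp (mem_range.mp ht)
      push_cast at hN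
      rw [max_eq_left]
      rcases le_or_gt 0 p with hp | hp <;> nlinarith

lemma gap_le_gapBound {p c : ℝ} (hp0 : 0 ≤ p) (hp1 : p ≤ 1) (hpc : p ≤ c) (N : ℕ) :
    p * ∑ t ∈ range (N + 1), (1 - p) ^ t * max (1 - t * c) 0 - p ≤ gapBound N := by
  obtain ⟨m, hmN, hm⟩ := exists_sum_range_pow_mul_max_le p N
  have hcp : ∑ t ∈ range (N + 1), (1 - p) ^ t * max (1 - t * c) 0
      ≤ ∑ t ∈ range (N + 1), (1 - p) ^ t * max (1 - t * p) 0 := by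
    gcongr
  have hmax := mul_one_sub_pow_le (m + 1) hp0 hp1
  calc p * ∑ t ∈ range (N + 1), (1 - p) ^ t * max (1 - t * c) 0 - p
      ≤ p * (1 + m * (1 - p) ^ (m + 1)) - p := by gcongr; exact hcp.trans hm
    _ = m * (p * (1 - p) ^ (m + 1)) := by ring
    _ ≤ m * ((m + 1 : ℕ) ^ (m + 1) / ((m + 1 : ℕ) + 1) ^ (m + 1 + 1)) := by gcongr
    _ = gapBound m := by unfold gapBound; push_cast; ring
    _ ≤ gapBound N := gapBound_mono hmN

def survival (u : ℕ → ℝ) (t : ℕ) : ℝ := ∏ j ∈ range t, (1 - u j)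

lemma survival_mul_eq_sub (u : ℕ → ℝ) (t : ℕ) :
    survival u t * u t = survival u t - survival u (t + 1) := by
  rw [survival, survival, prod_range_succ]; ring

lemma sum_survival_mul (u : ℕ → ℝ) (m : ℕ) :
    ∑ t ∈ range m, survival u t * u t = 1 - survival u m := by
  simp only [survival_mul_eq_sub, sum_range_sub']
  rw [survival, prod_range_zero]

lemma survival_mem_Icc {u : ℕ → ℝ} {t : ℕ} (hu : ∀ j < t, u j ∈ Set.Icc 0 1) :
    survival u t ∈ Set.Icc 0 1 :=
  ⟨prod_nonneg fun j hj => by linarith [(hu j (mem_range.1 hj)).2],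
    prod_le_one (fun j hj => by linarith [(hu j (mem_range.1 hj)).2])
      fun j hj => by linarith [(hu j (mem_range.1 hj)).1]⟩

lemma le_sum_max_mul_survival {u : ℕ → ℝ} {n k : ℕ} {c : ℝ}
    (hu : ∀ j < n, u j ∈ Set.Icc 0 1) (hc : 0 ≤ c) (hk : k < n) :
    u k - k * c ≤ ∑ t ∈ range n, max (1 - t * c) 0 * (survival u t * u t) := by
  have hterm : ∀ t < n, 0 ≤ survival u t * u t := fun t ht =>
    mul_nonneg (survival_mem_Icc fun j hj => hu j (hj.trans ht)).1 (hu t ht).1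
  obtain ⟨huk0, huk1⟩ := hu k hk
  have hsurv : survival u (k + 1) ≤ 1 - u k := by
    have := survival_mem_Icc fun j (hj : j < k) => hu j (hj.trans hk)
    rw [survival, prod_range_succ, ← survival]
    nlinarith [this.1, this.2]
  calc u k - k * c ≤ (1 - k * c) * u k := by nlinarith [mul_nonneg (Nat.cast_nonneg k) hc]
    _ ≤ max (1 - k * c) 0 * (1 - survival u (k + 1)) := by
        gcongr
        · exact le_max_left _ _
        · linarith
    _ = ∑ t ∈ range (k + 1), max (1 - k * c) 0 * (survival u t * u t) := by
        rw [← mul_sum, sum_survival_mul]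
    _ ≤ ∑ t ∈ range (k + 1), max (1 - t * c) 0 * (survival u t * u t) := by
        gcongr with t ht
        · exact hterm t ((mem_range.1 ht).trans_le hk)
        · exact_mod_cast Nat.lt_succ_iff.1 (mem_range.1 ht)
    _ ≤ ∑ t ∈ range n, max (1 - t * c) 0 * (survival u t * u t) :=
        sum_le_sum_of_subset_of_nonneg (range_subset_range.2 hk) fun t ht _ =>
          mul_nonneg (le_max_right _ _) (hterm t (mem_range.1 ht))

lemma isStopRule_const {Ω : Type*} (Y : ℕ → Ω → ℝ) {n i : ℕ} (hi : i ∈ Finset.Icc 1 n) :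
    IsStopRule Y n (fun _ => i) :=
  ⟨fun _ => hi, fun j _ => MeasurableSet.const (i = j)⟩

section

variable {Ω : Type*} [MeasurableSpace Ω] {μ : Measure Ω}

lemma integral_le_Vn [IsProbabilityMeasure μ] {Y : ℕ → Ω → ℝ} {n : ℕ} {τ : Ω → ℕ} {C : ℝ}
    (hτ : IsStopRule Y n τ) (hY : ∀ i ∈ Finset.Icc 1 n, ∀ ω, Y i ω ≤ C) :
    ∫ ω, Y (τ ω) ω ∂μ ≤ Vn μ Y n := by
  -- `max C 0` because a non-integrable `Y_σ` has integral `0`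
  refine le_csSup ⟨max C 0, ?_⟩ ⟨τ, hτ, rfl⟩
  rintro _ ⟨σ, hσ, rfl⟩
  by_cases hint : Integrable (fun ω => Y (σ ω) ω) μ
  · calc ∫ ω, Y (σ ω) ω ∂μ ≤ ∫ _, max C 0 ∂μ :=
          integral_mono hint (integrable_const _) fun ω => (hY _ (hσ.1 ω) ω).trans (le_max_left _ _)
      _ = max C 0 := by simp
  · rw [integral_undef hint]
    exact le_max_right _ _

lemma Mn_le_integral {Y : ℕ → Ω → ℝ} {n : ℕ} {g : Ω → ℝ} (hn : 1 ≤ n)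
    (hY : ∀ i, Measurable (Y i)) (hY1 : Integrable (Y 1) μ) (hg : Integrable g μ)
    (hle : ∀ ω, ∀ i ∈ Finset.Icc 1 n, Y i ω ≤ g ω) :
    Mn μ Y n ≤ ∫ ω, g ω ∂μ := by
  have hne : (Finset.Icc 1 n).Nonempty := Finset.nonempty_Icc.2 hn
  have hsup : ∀ ω, sSup ((fun i => Y i ω) '' Set.Icc 1 n) = (Finset.Icc 1 n).sup' hne Y ω := by
    intro ω
    rw [Finset.sup'_apply, Finset.sup'_eq_csSup_image, Finset.coe_Icc]
  have hmax : Measurable ((Finset.Icc 1 n).sup' hne Y) := Finset.measurable_sup' hne fun i _ => hY i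
  have h1 : (1 : ℕ) ∈ Finset.Icc 1 n := Finset.mem_Icc.2 ⟨le_rfl, hn⟩
  have hle' : ∀ ω, (Finset.Icc 1 n).sup' hne Y ω ≤ g ω := fun ω => by
    rw [Finset.sup'_apply]; exact Finset.sup'_le _ _ (hle ω)
  unfold Mn
  simp_rw [hsup]
  refine integral_mono (integrable_of_le_of_le hmax.aestronglyMeasurable
    (ae_of_all _ fun ω => ?_) (ae_of_all _ hle') hY1 hg) hg hle'
  rw [Finset.sup'_apply]
  exact Finset.le_sup' (fun i => Y i ω) h1

variable [IsProbabilityMeasure μ] {X : ℕ → Ω → ℝ} {n : ℕ}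

lemma integrable_of_mem_Icc_zero_one (hmeas : ∀ i, Measurable (X i))
    (hval : ∀ i ∈ Set.Icc 1 n, ∀ ω, X i ω ∈ Set.Icc (0 : ℝ) 1) {i : ℕ} (hi : i ∈ Set.Icc 1 n) :
    Integrable (X i) μ :=
  Integrable.of_mem_Icc 0 1 (hmeas i).aemeasurable (ae_of_all _ (hval i hi))

lemma integrable_survival (hmeas : ∀ i, Measurable (X i))
    (hval : ∀ i ∈ Set.Icc 1 n, ∀ ω, X i ω ∈ Set.Icc (0 : ℝ) 1) {t : ℕ} (ht : t ≤ n) :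
    Integrable (fun ω => survival (fun j => X (j + 1) ω) t) μ :=
  Integrable.of_mem_Icc 0 1 (by unfold survival; fun_prop) <| ae_of_all _ fun ω =>
    survival_mem_Icc fun j hj => hval (j + 1) ⟨by omega, by omega⟩ ω

lemma integral_survival {p : ℝ} (hindep : iIndepFun (fun i : Fin n => X (i.1 + 1)) μ)
    (hint : ∀ i ∈ Set.Icc 1 n, Integrable (X i) μ)
    (hmean : ∀ i ∈ Set.Icc 1 n, ∫ ω, X i ω ∂μ = p) {t : ℕ} (ht : t ≤ n) :
    ∫ ω, survival (fun j => X (j + 1) ω) t ∂μ = (1 - p) ^ t := by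
  have hrange (g : ℕ → ℝ) : ∏ i : Fin n, (if (i : ℕ) < t then g i else 1) = ∏ j ∈ range t, g j := by
    rw [Fin.prod_univ_eq_prod_range (fun j => if j < t then g j else 1), ← prod_filter]
    congr 1
    ext j
    simp only [mem_filter, mem_range]
    omega
  have hmem (i : Fin n) : (i : ℕ) + 1 ∈ Set.Icc 1 n := ⟨by omega, i.2⟩
  have hprod := hindep.integral_fun_prod_comp
    (f := fun (i : Fin n) (x : ℝ) => if (i : ℕ) < t then 1 - x else 1)
    (fun i => (hint _ (hmem i)).aemeasurable) fun i => by
      by_cases h : (i : ℕ) < t <;> simp only [h, if_true, if_false] <;> fun_prop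
  calc ∫ ω, survival (fun j => X (j + 1) ω) t ∂μ
      = ∫ ω, ∏ i : Fin n, (if (i : ℕ) < t then 1 - X ((i : ℕ) + 1) ω else 1) ∂μ := by
        congr with ω
        exact (hrange fun j => 1 - X (j + 1) ω).symm
    _ = ∏ i : Fin n, (if (i : ℕ) < t then 1 - p else 1) := by
        rw [hprod]
        refine prod_congr rfl fun i _ => ?_
        split_ifs
        · rw [integral_sub (integrable_const 1) (hint _ (hmem i)), hmean _ (hmem i)]
          simp
        · simp
    _ = (1 - p) ^ t := by rw [hrange fun _ => 1 - p, prod_const, card_range]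

lemma integral_survival_mul {p : ℝ} (hmeas : ∀ i, Measurable (X i))
    (hindep : iIndepFun (fun i : Fin n => X (i.1 + 1)) μ)
    (hval : ∀ i ∈ Set.Icc 1 n, ∀ ω, X i ω ∈ Set.Icc (0 : ℝ) 1)
    (hmean : ∀ i ∈ Set.Icc 1 n, ∫ ω, X i ω ∂μ = p) {t : ℕ} (ht : t < n) :
    Integrable (fun ω => survival (fun j => X (j + 1) ω) t * X (t + 1) ω) μ ∧
      ∫ ω, survival (fun j => X (j + 1) ω) t * X (t + 1) ω ∂μ = (1 - p) ^ t * p := by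
  have hint : ∀ i ∈ Set.Icc 1 n, Integrable (X i) μ := fun _ =>
    integrable_of_mem_Icc_zero_one hmeas hval
  simp only [survival_mul_eq_sub (fun j => X (j + 1) _)]
  refine ⟨(integrable_survival hmeas hval ht.le).sub (integrable_survival hmeas hval ht), ?_⟩
  rw [integral_sub (integrable_survival hmeas hval ht.le) (integrable_survival hmeas hval ht),
    integral_survival hindep hint hmean ht.le, integral_survival hindep hint hmean ht, pow_succ]
  ring

lemma Mn_le_of_iIndepFun {p c : ℝ} (hmeas : ∀ i, Measurable (X i))
    (hindep : iIndepFun (fun i : Fin n => X (i.1 + 1)) μ)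
    (hval : ∀ i ∈ Set.Icc 1 n, ∀ ω, X i ω ∈ Set.Icc (0 : ℝ) 1)
    (hmean : ∀ i ∈ Set.Icc 1 n, ∫ ω, X i ω ∂μ = p) (hn : 1 ≤ n) (hc : 0 ≤ c) :
    Mn μ (fun i ω => X i ω - i * c) n
      ≤ -c + p * ∑ t ∈ range n, (1 - p) ^ t * max (1 - t * c) 0 := by
  have hterm (t : ℕ) (ht : t ∈ range n) :=
    integral_survival_mul (μ := μ) hmeas hindep hval hmean (mem_range.1 ht)
  have hsum : Integrable (fun ω => ∑ t ∈ range n,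
      max (1 - t * c) 0 * (survival (fun j => X (j + 1) ω) t * X (t + 1) ω)) μ :=
    integrable_finsetSum _ fun t ht => (hterm t ht).1.const_mul _
  have hX1 : Integrable (X 1) μ := integrable_of_mem_Icc_zero_one hmeas hval ⟨le_rfl, hn⟩
  calc Mn μ (fun i ω => X i ω - i * c) n
      ≤ ∫ ω, (-c + ∑ t ∈ range n,
          max (1 - t * c) 0 * (survival (fun j => X (j + 1) ω) t * X (t + 1) ω)) ∂μ := by
        refine Mn_le_integral hn (fun i => (hmeas i).sub_const _) (hX1.sub (integrable_const _))
          ((integrable_const _).add hsum) fun ω i hi => ?_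
        obtain ⟨k, rfl⟩ := Nat.exists_eq_add_of_le' (Finset.mem_Icc.1 hi).1
        have := le_sum_max_mul_survival (u := fun j => X (j + 1) ω)
          (fun j hj => hval (j + 1) ⟨by omega, by omega⟩ ω) hc (Finset.mem_Icc.1 hi).2
        push_cast
        linarith
    _ = -c + p * ∑ t ∈ range n, (1 - p) ^ t * max (1 - t * c) 0 := by
        rw [integral_add (integrable_const _) hsum, integral_const, integral_finsetSum _
          fun t ht => (hterm t ht).1.const_mul _, mul_sum]
        simp only [probReal_univ, one_smul, integral_const_mul]
        congr 1
        refine sum_congr rfl fun t ht => ?_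
        rw [(hterm t ht).2]
        ring

lemma sub_le_Vn {p c : ℝ} (hmeas : ∀ i, Measurable (X i))
    (hval : ∀ i ∈ Set.Icc 1 n, ∀ ω, X i ω ∈ Set.Icc (0 : ℝ) 1)
    (hp : ∫ ω, X 1 ω ∂μ = p) (hn : 1 ≤ n) (hc : 0 ≤ c) :
    p - c ≤ Vn μ (fun i ω => X i ω - i * c) n := by
  have hX1 : Integrable (X 1) μ := integrable_of_mem_Icc_zero_one hmeas hval ⟨le_rfl, hn⟩
  have hstop := integral_le_Vn (μ := μ) (C := 1)
    (isStopRule_const (fun i ω => X i ω - i * c) (Finset.mem_Icc.2 ⟨le_rfl, hn⟩))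
    fun i hi ω => by
      have := (hval i (Finset.mem_Icc.1 hi) ω).2
      have : (0 : ℝ) ≤ i * c := by positivity
      linarith
  rw [integral_sub hX1 (integrable_const _), hp] at hstop
  simpa using hstop

end

theorem stmt15
    {Ω : Type*} [MeasurableSpace Ω] (μ : Measure Ω) [IsProbabilityMeasure μ]
    (n : ℕ) (X : ℕ → Ω → ℝ)
    (hmeas : ∀ i, Measurable (X i))
    (hindep : iIndepFun (fun i : Fin n => X (i.1 + 1)) μ)
    (hident : ∀ i ∈ Set.Icc 1 n, IdentDistrib (X i) (X 1) μ μ)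
    (hval : ∀ i ∈ Set.Icc 1 n, ∀ ω, X i ω ∈ Set.Icc (0:ℝ) 1)
    (c : ℝ) (Y : ℕ → Ω → ℝ) (hY : ∀ i ω, Y i ω = X i ω - i * c)
    (hn : 2 ≤ n) (hc : 0 < c) (hEX : (∫ ω, X 1 ω ∂μ) ≤ c) :
    Mn μ Y n - Vn μ Y n ≤ (((n:ℝ) - 1) * (1 - 1/((n:ℝ)+1)) ^ n / ((n:ℝ)+1)) := by
  obtain rfl : Y = fun i ω => X i ω - i * c := funext fun i => funext (hY i)
  have h1 : 1 ∈ Set.Icc 1 n := ⟨le_rfl, by omega⟩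
  set p := ∫ ω, X 1 ω ∂μ with hp
  have hmean : ∀ i ∈ Set.Icc 1 n, ∫ ω, X i ω ∂μ = p := fun i hi => (hident i hi).integral_eq
  have hp0 : 0 ≤ p := integral_nonneg fun ω => (hval 1 h1 ω).1
  have hp1 : p ≤ 1 := by
    calc p ≤ ∫ _, (1 : ℝ) ∂μ :=
          integral_mono (integrable_of_mem_Icc_zero_one hmeas hval h1) (integrable_const 1)
            fun ω => (hval 1 h1 ω).2
      _ = 1 := by simp
  have hM := Mn_le_of_iIndepFun hmeas hindep hval hmean (by omega) hc.le
  have hV := sub_le_Vn (μ := μ) hmeas hval hp.symm (by omega) hc.le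
  obtain ⟨m, rfl⟩ := Nat.exists_eq_add_of_le' (by omega : 1 ≤ n)
  rw [← gapBound_sub_one (by omega), Nat.add_sub_cancel]
  linarith [gap_le_gapBound hp0 hp1 hEX m]
end
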